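/- Let R be a commutative ring and x ∈ R a nonunit. Then x is a parameter on R (i.e., x is weakly proregular, xR ≠ R, and H^1_x(R)_p ≠ 0 for all primes p containing x) if and only if ht(xR) ≥ 1 and (0 : x^n) = (0 : x^{n+1}) for some n ≥ 1. -/

import Mathlib

/-- The natural map between localizations of a module at powers of two elements
`a ∣ b`, sending `m/1` to `m/1`. -/

noncomputable def cechLoc {R : Type*} [CommRing R] {M : Type*} [AddCommGroup M] [Module R M]
    (a b : R) (hab : a ∣ b) :
    LocalizedModule (Submonoid.powers a) M →ₗ[R] LocalizedModule (Submonoid.powers b) M :=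
  LocalizedModule.lift _ (LocalizedModule.mkLinearMap (Submonoid.powers b) M) (by
    rintro ⟨s, n, rfl⟩
    obtain ⟨c, rfl⟩ := hab
    set f := algebraMap R (Module.End R (LocalizedModule (Submonoid.powers (a * c)) M)) with hf
    obtain ⟨u, hu⟩ := IsLocalizedModule.map_units
      (LocalizedModule.mkLinearMap (Submonoid.powers (a * c)) M)
      (⟨(a * c) ^ n, n, rfl⟩ : Submonoid.powers (a * c))
    have hcomm : Commute (f (a ^ n)) ↑u := by
      have : Commute (f (a ^ n)) (f ((a * c) ^ n)) := by
        simp only [Commute, SemiconjBy, ← map_mul, mul_comm]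
      rwa [← hu] at this
    refine ⟨⟨f (a ^ n), f (c ^ n) * ↑u⁻¹, ?_, ?_⟩, rfl⟩
    · rw [← mul_assoc, ← map_mul, ← mul_pow, ← hu]
      exact u.mul_inv
    · rw [mul_assoc, ← (hcomm.units_inv_right).eq, ← mul_assoc, ← map_mul]
      have : c ^ n * a ^ n = (a * c) ^ n := by ring
      rw [this, ← hu]
      exact u.mul_inv)

open scoped BigOperators
open Classical

noncomputable section

variable {R : Type*} [CommRing R]

/-- Degree `i` term of the Čech complex of the sequence `x` with coefficients in `M`:
the product over `i`-element subsets `t` of the index set of the localization of `M`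
at the product of the `x j` for `j ∈ t`. -/
noncomputable abbrev CechC {ℓ : ℕ} (x : Fin ℓ → R) (M : Type*) [AddCommGroup M] [Module R M]
    (i : ℕ) : Type _ :=
  ∀ t : {t : Finset (Fin ℓ) // t.card = i}, LocalizedModule (Submonoid.powers (∏ j ∈ t.1, x j)) M

/-- The Čech differential `C^i → C^{i+1}`: the alternating sum of the further-localization
maps. -/
noncomputable def cechD {ℓ : ℕ} (x : Fin ℓ → R) (M : Type*) [AddCommGroup M] [Module R M]
    (i : ℕ) : CechC x M i →ₗ[R] CechC x M (i + 1) where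
  toFun m t := ∑ j ∈ (t.1).attach,
    ((-1 : ℤ) ^ ((t.1.filter (· < j.1)).card)) •
      cechLoc (∏ k ∈ t.1.erase j.1, x k) (∏ k ∈ t.1, x k)
        (Finset.prod_dvd_prod_of_subset _ _ _ (Finset.erase_subset _ _))
        (m ⟨t.1.erase j.1, by rw [Finset.card_erase_of_mem j.2, t.2]; omega⟩)
  map_add' := by
    intro a b
    funext t
    simp [Pi.add_apply, map_add, smul_add, Finset.sum_add_distrib]
    rw [← Finset.sum_add_distrib]
    refine Finset.sum_congr rfl fun j _ => ?_
    first
      | exact smul_add _ _ _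
      | exact (DistribSMul.smul_add _ _ _)
      | (rw [zsmul_eq_mul]; ring)
      | module
  map_smul' := by
    intro r a
    funext t
    simp [Pi.smul_apply, map_smul, Finset.smul_sum, smul_comm r]

/-- The submodule of Čech coboundaries in degree `i`. -/
noncomputable def cechPrevRange {ℓ : ℕ} (x : Fin ℓ → R) (M : Type*) [AddCommGroup M]
    [Module R M] : (i : ℕ) → Submodule R (CechC x M i)
  | 0 => ⊥
  | (i + 1) => LinearMap.range (cechD x M i)

/-- The `i`-th Čech cohomology of `M` with respect to the sequence `x`:
cocycles modulo coboundaries. -/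
noncomputable abbrev CechH {ℓ : ℕ} (x : Fin ℓ → R) (M : Type*) [AddCommGroup M] [Module R M]
    (i : ℕ) : Type _ :=
  LinearMap.ker (cechD x M i) ⧸
    (cechPrevRange x M i).comap (LinearMap.ker (cechD x M i)).subtype


/-- Degree `i` term of the Koszul complex on `ℓ` elements: free module indexed by
`i`-element subsets of the index set. -/
abbrev KoszulC (R : Type*) [CommRing R] (ℓ i : ℕ) : Type _ :=
  {t : Finset (Fin ℓ) // t.card = i} → R

/-- The Koszul differential `K_{i+1} → K_i` for the sequence `x^k = x_1^k, ..., x_ℓ^k`. -/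
noncomputable def koszulD {ℓ : ℕ} (x : Fin ℓ → R) (k : ℕ) (i : ℕ) :
    KoszulC R ℓ (i + 1) →ₗ[R] KoszulC R ℓ i where
  toFun m s := ∑ j ∈ (s.1ᶜ).attach,
    ((-1 : ℤ) ^ ((s.1.filter (· < j.1)).card)) •
      ((x j.1 ^ k) * m ⟨insert j.1 s.1, by
        rw [Finset.card_insert_of_notMem (Finset.mem_compl.mp j.2), s.2]⟩)
  map_add' := by
    intro a b
    funext s
    simp [mul_add, smul_add, Finset.sum_add_distrib]
  map_smul' := by
    intro r a
    funext s
    simp [Finset.mul_sum, mul_smul_comm, mul_left_comm]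
  
/-- The standard transition chain map `K(x^m) → K(x^n)` (for `n ≤ m`) in degree `i`:
multiplication on the component indexed by `t` by `∏_{j ∈ t} x_j^{m-n}`. -/
noncomputable def koszulTr {ℓ : ℕ} (x : Fin ℓ → R) (m n i : ℕ) :
    KoszulC R ℓ i →ₗ[R] KoszulC R ℓ i where
  toFun z t := (∏ j ∈ t.1, x j ^ (m - n)) * z t
  map_add' := by intro a b; funext t; simp [mul_add]
  map_smul' := by intro r a; funext t; simp; ring

/-- A finite sequence `x` is weakly proregular if for each `n` there is `m ≥ n` such that
the transition maps `H_i(x^m; R) → H_i(x^n; R)` on Koszul homology vanish for all `i ≥ 1`;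
equivalently, the transition image of every cycle is a boundary. -/
def WeaklyProregular {ℓ : ℕ} (x : Fin ℓ → R) : Prop :=
  ∀ n : ℕ, 1 ≤ n → ∃ m, n ≤ m ∧ ∀ i : ℕ, ∀ z : KoszulC R ℓ (i + 1),
    koszulD x m i z = 0 →
      ∃ b : KoszulC R ℓ (i + 1 + 1), koszulD x n (i + 1) b = koszulTr x m n (i + 1) z

/-- The height of an ideal: the infimum of the heights of the primes containing it. -/
noncomputable def idealHeight (I : Ideal R) : ℕ∞ :=
  ⨅ p : {p : PrimeSpectrum R // I ≤ p.asIdeal}, Order.height p.1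


/-- A finite sequence `x` (given as a list `l`) is a parameter sequence on `R` if it is
weakly proregular, generates a proper ideal, and the localized top Čech cohomology
`H^{ℓ(x)}_x(R)_p` is nonzero for every prime `p` containing `(x)R`. -/
def IsParamSeq (l : List R) : Prop :=
  WeaklyProregular l.get ∧ Ideal.span {a | a ∈ l} ≠ ⊤ ∧
    ∀ p : PrimeSpectrum R, Ideal.span {a | a ∈ l} ≤ p.asIdeal →
      Nontrivial (LocalizedModule p.asIdeal.primeCompl (CechH l.get R l.length))

/-- A strong parameter sequence: every initial segment is a parameter sequence. -/
def IsStrongParamSeq (l : List R) : Prop :=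
  ∀ i : ℕ, i ≤ l.length → IsParamSeq (l.take i)

/-! For one element the positive-degree Koszul homology is `H_1(x^m; R) = (0 : x^m)`, with
transition maps multiplication by `x^(m-n)`; so weak proregularity says that the annihilator
chain `(0 : x^n)` is pro-zero, which for a single element amounts to its stabilizing.
On the Čech side, `H^1_x(R) = R_x/R` is killed by every `s` with `s x^n = 0`, and conversely
`s • [1/x] = 0` forces `(s - x r) x^k = 0` for some `r`, `k`; as `s - x r ∉ p` whenever
`s ∉ p ∋ x`, the localization `H^1_x(R)_p` vanishes exactly when `x` is nilpotent in `R_p`.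
Finally `x` is nilpotent in `R_p` for some prime `p ∋ x` iff `x` lies in a minimal prime,
i.e. iff `ht(xR) = 0`. -/

lemma mul_pow_eq_zero_of_mul_pow_add_eq_zero {x : R} {n : ℕ}
    (hstab : ∀ r : R, r * x ^ (n + 1) = 0 → r * x ^ n = 0) (k : ℕ) {r : R}
    (hr : r * x ^ (n + k) = 0) : r * x ^ n = 0 := by
  induction k generalizing r with
  | zero => exact hr
  | succ k ih =>
    have hrx : r * x * x ^ n = 0 := ih (by rw [← hr]; ring)
    exact hstab r (by rw [← hrx]; ring)

lemma forall_exists_mul_pow_sub_eq_zero_iff (x : R) :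
    (∀ n : ℕ, 1 ≤ n → ∃ m, n ≤ m ∧ ∀ r : R, r * x ^ m = 0 → r * x ^ (m - n) = 0) ↔
      ∃ n : ℕ, 1 ≤ n ∧ ∀ r : R, r * x ^ n = 0 ↔ r * x ^ (n + 1) = 0 := by
  constructor
  · intro h
    obtain ⟨m, hm, hkill⟩ := h 1 le_rfl
    refine ⟨m, hm, fun r => ⟨fun hr => by rw [pow_succ, ← mul_assoc, hr, zero_mul],
      fun hr => ?_⟩⟩
    obtain ⟨k, rfl⟩ := Nat.exists_eq_add_of_le' hm
    have hrx : r * x * x ^ k = 0 := by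
      simpa only [Nat.add_sub_cancel] using hkill (r * x) (by rw [← hr]; ring)
    rw [← hrx]; ring
  · rintro ⟨n, -, hstab⟩ k -
    refine ⟨n + k, Nat.le_add_left k n, fun r hr => ?_⟩
    rw [Nat.add_sub_cancel]
    exact mul_pow_eq_zero_of_mul_pow_add_eq_zero (fun r => (hstab r).2) k hr

lemma isNilpotent_algebraMap_atPrime_iff {p : Ideal R} [p.IsPrime] {x : R} :
    IsNilpotent (algebraMap R (Localization.AtPrime p) x) ↔
      ∃ s ∉ p, ∃ n : ℕ, s * x ^ n = 0 := by
  simp only [IsNilpotent, ← map_pow, IsLocalization.map_eq_zero_iff p.primeCompl]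
  exact ⟨fun ⟨n, s, hs⟩ => ⟨s, s.2, n, hs⟩, fun ⟨s, hs, n, h⟩ => ⟨n, ⟨s, hs⟩, h⟩⟩

lemma isNilpotent_algebraMap_atPrime_of_mem_minimalPrimes {p : Ideal R} [p.IsPrime]
    (hp : p ∈ minimalPrimes R) {x : R} (hx : x ∈ p) :
    IsNilpotent (algebraMap R (Localization.AtPrime p) x) := by
  have hrad := IsLocalization.AtPrime.radical_map_of_mem_minimalPrimes
    (A := Localization.AtPrime p) p ⊥ hp
  have hxmap := Ideal.mem_map_of_mem (algebraMap R (Localization.AtPrime p)) hx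
  rw [← hrad, Ideal.map_bot] at hxmap
  obtain ⟨n, hn⟩ := hxmap
  exact ⟨n, Ideal.mem_bot.mp hn⟩

lemma forall_not_isNilpotent_algebraMap_atPrime_iff (x : R) :
    (∀ p : PrimeSpectrum R, x ∈ p.asIdeal →
        ¬ IsNilpotent (algebraMap R (Localization.AtPrime p.asIdeal) x)) ↔
      ∀ q ∈ minimalPrimes R, x ∉ q := by
  constructor
  · intro h q hq hxq
    have hq' : q.IsPrime := hq.1.1
    exact h ⟨q, hq'⟩ hxq (isNilpotent_algebraMap_atPrime_of_mem_minimalPrimes hq hxq)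
  · intro h p hxp hnil
    obtain ⟨s, hs, n, hsx⟩ := isNilpotent_algebraMap_atPrime_iff.mp hnil
    obtain ⟨q, hq, hqp⟩ := Ideal.exists_minimalPrimes_le (bot_le : ⊥ ≤ p.asIdeal)
    have hq' : q.IsPrime := hq.1.1
    have hmem : s * x ^ n ∈ q := hsx ▸ q.zero_mem
    exact (hq'.mem_or_mem hmem).elim (fun hsq => hs (hqp hsq))
      (fun hxq => h q hq (hq'.mem_of_pow_mem n hxq))

lemma one_le_idealHeight_iff (I : Ideal R) :
    1 ≤ idealHeight I ↔ ∀ q ∈ minimalPrimes R, ¬ I ≤ q := by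
  simp only [idealHeight, le_iInf_iff, Order.one_le_iff_ne_zero, Ne, Order.height_eq_zero,
    PrimeSpectrum.isMin_iff, Subtype.forall]
  exact ⟨fun h q hq hIq => h ⟨q, hq.1.1⟩ hIq hq, fun h p hIp hp => h _ hp hIp⟩

lemma Finset.fin_one_eq_of_card_eq_one {t : Finset (Fin 1)} (ht : t.card = 1) : t = {0} := by
  obtain ⟨a, rfl⟩ := Finset.card_eq_one.mp ht
  rw [Subsingleton.elim a 0]

instance isEmpty_finset_fin_one_card_eq_add_two (i : ℕ) :
    IsEmpty {t : Finset (Fin 1) // t.card = i + 2} :=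
  ⟨fun t => by have := t.2 ▸ Finset.card_le_univ t.1; simp at this⟩

lemma koszulD_fin_one_zero_apply (x : R) (k : ℕ) (z : KoszulC R 1 1)
    (s : {t : Finset (Fin 1) // t.card = 0}) :
    koszulD ![x] k 0 z s = x ^ k * z ⟨{0}, rfl⟩ := by
  obtain ⟨s, hs⟩ := s
  obtain rfl := Finset.card_eq_zero.mp hs
  have hattach : (∅ : Finset (Fin 1))ᶜ.attach = {⟨0, by simp⟩} := by
    ext j; simp [Subtype.ext_iff, Subsingleton.elim j.1 0]
  simp only [koszulD, LinearMap.coe_mk, AddHom.coe_mk, hattach, Finset.sum_singleton,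
    Finset.filter_empty, Finset.card_empty, pow_zero, one_smul]
  rfl

lemma koszulD_fin_one_succ (x : R) (k i : ℕ) (b : KoszulC R 1 (i + 2)) :
    koszulD ![x] k (i + 1) b = 0 := by
  rw [Subsingleton.elim b 0, map_zero]

lemma koszulTr_fin_one_apply (x : R) (m n : ℕ) (z : KoszulC R 1 1)
    (t : {t : Finset (Fin 1) // t.card = 1}) :
    koszulTr ![x] m n 1 z t = x ^ (m - n) * z t := by
  obtain ⟨t, ht⟩ := t
  obtain rfl := Finset.fin_one_eq_of_card_eq_one ht
  simp [koszulTr]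

lemma koszul_fin_one_transition_iff (x : R) (m n : ℕ) :
    (∀ i : ℕ, ∀ z : KoszulC R 1 (i + 1), koszulD ![x] m i z = 0 →
        ∃ b : KoszulC R 1 (i + 1 + 1), koszulD ![x] n (i + 1) b = koszulTr ![x] m n (i + 1) z) ↔
      ∀ r : R, r * x ^ m = 0 → r * x ^ (m - n) = 0 := by
  constructor
  · intro h r hr
    obtain ⟨b, hb⟩ := h 0 (fun _ => r) <| funext fun s => by
      rw [koszulD_fin_one_zero_apply, mul_comm]; exact hr
    have h0 := congrFun hb ⟨{0}, rfl⟩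
    rw [koszulD_fin_one_succ, koszulTr_fin_one_apply] at h0
    rw [mul_comm]; exact h0.symm
  · rintro h (_ | i) z hz
    · refine ⟨0, funext fun ⟨t, ht⟩ => ?_⟩
      obtain rfl := Finset.fin_one_eq_of_card_eq_one ht
      have hz0 := congrFun hz ⟨∅, rfl⟩
      rw [koszulD_fin_one_zero_apply, mul_comm] at hz0
      rw [map_zero, koszulTr_fin_one_apply, mul_comm]
      exact (h _ hz0).symm
    · exact ⟨0, by rw [Subsingleton.elim z 0, map_zero, map_zero]⟩

lemma weaklyProregular_singleton_iff (x : R) :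
    WeaklyProregular ![x] ↔
      ∀ n : ℕ, 1 ≤ n → ∃ m, n ≤ m ∧ ∀ r : R, r * x ^ m = 0 → r * x ^ (m - n) = 0 := by
  simp only [WeaklyProregular, koszul_fin_one_transition_iff]

lemma LocalizedModule.smul_eq_zero_of_mul_pow_eq_zero {M : Type*} [AddCommGroup M] [Module R M]
    {a s : R} {n : ℕ} (hs : s * a ^ n = 0) (m : LocalizedModule (Submonoid.powers a) M) :
    s • m = 0 := by
  induction m using LocalizedModule.induction_on with
  | h m u =>
    rw [LocalizedModule.smul'_mk, ← LocalizedModule.zero_mk u, LocalizedModule.mk_eq]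
    refine ⟨⟨a ^ n, n, rfl⟩, ?_⟩
    simp only [Submonoid.smul_def, smul_zero, smul_smul, mul_comm _ s, ← mul_assoc, hs, zero_mul,
      zero_smul]

lemma prod_fin_one_of_card_eq_one (x : R) (t : {t : Finset (Fin 1) // t.card = 1}) :
    ∏ j ∈ t.1, ![x] j = x := by
  rw [Finset.fin_one_eq_of_card_eq_one t.2]
  simp

section CechOne

variable {M : Type*} [AddCommGroup M] [Module R M]

lemma smul_cechH_one_eq_zero {x s : R} {n : ℕ} (hs : s * x ^ n = 0) (h : CechH ![x] M 1) :
    s • h = 0 := by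
  obtain ⟨⟨c, hc⟩, rfl⟩ := Submodule.Quotient.mk_surjective _ h
  have hsc : s • (⟨c, hc⟩ : LinearMap.ker (cechD ![x] M 1)) = 0 :=
    Subtype.ext <| funext fun t => LocalizedModule.smul_eq_zero_of_mul_pow_eq_zero
      (by rwa [prod_fin_one_of_card_eq_one]) (c t)
  rw [← Submodule.Quotient.mk_smul, hsc, Submodule.Quotient.mk_zero]

lemma cechD_fin_one_one (x : R) (c : CechC ![x] M 1) : cechD ![x] M 1 c = 0 :=
  Subsingleton.elim _ _

lemma exists_cechD_fin_one_zero_eq_mk (x : R) (w : CechC ![x] M 0) :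
    ∃ m : M, cechD ![x] M 0 w ⟨{0}, rfl⟩ = LocalizedModule.mk m 1 := by
  have hattach : ({0} : Finset (Fin 1)).attach = {⟨0, Finset.mem_singleton_self 0⟩} := by
    ext j; simp [Subtype.ext_iff, Subsingleton.elim j.1 0]
  simp only [cechD, LinearMap.coe_mk, AddHom.coe_mk, hattach, Finset.sum_singleton]
  generalize w _ = y
  induction y using LocalizedModule.induction_on with
  | h m u =>
    have hu : u = 1 := Subtype.ext <| by
      obtain ⟨k, hk⟩ := u.2
      rw [← hk]
      simp
    refine ⟨m, ?_⟩
    simp [hu, cechLoc]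

end CechOne

/-- The class of `1/x` in `H^1_x(R) = R_x/R`. -/
def cechInvClass (x : R) : CechH ![x] R 1 :=
  Submodule.Quotient.mk ⟨fun t => LocalizedModule.mk 1 ⟨∏ j ∈ t.1, ![x] j, 1, pow_one _⟩,
    cechD_fin_one_one x _⟩

lemma exists_sub_mul_mul_pow_eq_zero_of_smul_cechInvClass {x s : R}
    (hs : s • cechInvClass x = 0) : ∃ r : R, ∃ k : ℕ, (s - x * r) * x ^ k = 0 := by
  rw [cechInvClass, ← Submodule.Quotient.mk_smul, Submodule.Quotient.mk_eq_zero] at hs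
  obtain ⟨w, hw⟩ := hs
  obtain ⟨r, hr⟩ := exists_cechD_fin_one_zero_eq_mk x w
  have h0 := congrFun hw ⟨{0}, rfl⟩
  rw [hr] at h0
  simp only [Submodule.subtype_apply, Submodule.coe_smul, Pi.smul_apply,
    LocalizedModule.smul'_mk, smul_eq_mul, mul_one] at h0
  obtain ⟨⟨_, k, rfl⟩, hk⟩ := LocalizedModule.mk_eq.mp h0
  simp only [Submonoid.smul_def, smul_eq_mul, OneMemClass.coe_one, one_mul,
    Finset.prod_singleton, Matrix.cons_val_fin_one] at hk
  exact ⟨r, k, by linear_combination -hk⟩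

lemma nontrivial_localizedModule_cechH_one_iff {x : R} {p : Ideal R} [p.IsPrime] (hx : x ∈ p) :
    Nontrivial (LocalizedModule p.primeCompl (CechH ![x] R 1)) ↔
      ¬ IsNilpotent (algebraMap R (Localization.AtPrime p) x) := by
  rw [← not_subsingleton_iff_nontrivial, LocalizedModule.subsingleton_iff,
    isNilpotent_algebraMap_atPrime_iff, not_iff_not]
  constructor
  · intro h
    obtain ⟨s, hs, hsx⟩ := h (cechInvClass x)
    obtain ⟨r, k, hk⟩ := exists_sub_mul_mul_pow_eq_zero_of_smul_cechInvClass hsx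
    refine ⟨s - x * r, fun hmem => hs ?_, k, hk⟩
    simpa using p.add_mem hmem (p.mul_mem_right r hx)
  · rintro ⟨s, hs, n, hsn⟩ h
    exact ⟨s, hs, smul_cechH_one_eq_zero hsn h⟩

/-- A nonunit `x` of a commutative ring `R` is a parameter on `R` (weakly proregular, with
`H^1_x(R)_p ≠ 0` for all primes `p ∋ x`) iff `ht(xR) ≥ 1` and the annihilator chain of `x`
stabilizes: `(0 : x^n) = (0 : x^{n+1})` for some `n ≥ 1`. -/
theorem stmt_9 {R : Type*} [CommRing R] (x : R) (hx : ¬ IsUnit x) :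
    (WeaklyProregular ![x] ∧ Ideal.span {x} ≠ ⊤ ∧
        ∀ p : PrimeSpectrum R, x ∈ p.asIdeal →
          Nontrivial (LocalizedModule p.asIdeal.primeCompl (CechH ![x] R 1))) ↔
      (1 ≤ idealHeight (Ideal.span {x}) ∧
        ∃ n : ℕ, 1 ≤ n ∧ ∀ r : R, r * x ^ n = 0 ↔ r * x ^ (n + 1) = 0) := by
  have hspan : Ideal.span {x} ≠ ⊤ := fun h => hx (Ideal.span_singleton_eq_top.mp h)
  have hcech : (∀ p : PrimeSpectrum R, x ∈ p.asIdeal →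
      Nontrivial (LocalizedModule p.asIdeal.primeCompl (CechH ![x] R 1))) ↔
        ∀ q ∈ minimalPrimes R, x ∉ q := by
    rw [← forall_not_isNilpotent_algebraMap_atPrime_iff]
    exact forall₂_congr fun p hxp => nontrivial_localizedModule_cechH_one_iff hxp
  rw [weaklyProregular_singleton_iff, forall_exists_mul_pow_sub_eq_zero_iff, hcech,
    one_le_idealHeight_iff]
  simp only [Ideal.span_singleton_le_iff_mem]
  tauto

end
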